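/- Assume σ ≥ 6r/m. Then for every k ≥ 0, 𝓛(Z^k) ≥ f(x^{τ_k}) ≥ f* > −∞. -/
import Mathlib


open scoped RealInnerProductSpace
open Filter Topology

/-- `ℝⁿ` as a Euclidean space. -/
abbrev Vec (n : ℕ) := EuclideanSpace ℝ (Fin n)

/-- The augmented Lagrangian
`𝓛(x, X, Π) = ∑ i [(1/m) fᵢ(Xᵢ) + ⟪Xᵢ - x, Πᵢ⟫ + (σ/2)‖Xᵢ - x‖²]`. -/
noncomputable def LA {n : ℕ} (m : ℕ) (σ : ℝ) (fi : Fin m → Vec n → ℝ)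
    (x : Vec n) (X P : Fin m → Vec n) : ℝ :=
  ∑ i, ((m : ℝ)⁻¹ * fi i (X i) + ⟪X i - x, P i⟫ + σ / 2 * ‖X i - x‖ ^ 2)

/-- The overall loss `f = (1/m) ∑ i, fᵢ`. -/
noncomputable def ftot {n : ℕ} (m : ℕ) (fi : Fin m → Vec n → ℝ) (x : Vec n) : ℝ :=
  (m : ℝ)⁻¹ * ∑ i, fi i x

theorem fedgia_stmt6
    (n m k₀ : ℕ) (hn : 0 < n) (hm : 0 < m) (hk₀ : 0 < k₀)
    (σ : ℝ) (hσ : 0 < σ)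
    (fi : Fin m → Vec n → ℝ)
    (ri : Fin m → ℝ)
    (hfiC1 : ∀ i, ContDiff ℝ 1 (fi i))
    (hfib : ∀ i, BddBelow (Set.range (fi i)))
    (hri : ∀ i, 0 < ri i)
    (hlip : ∀ i x z, ‖gradient (fi i) x - gradient (fi i) z‖ ≤ ri i * ‖x - z‖)
    (H : Fin m → (Vec n →L[ℝ] Vec n))
    (hHsymm : ∀ i x y, ⟪H i x, y⟫ = ⟪x, H i y⟫)
    (hHpsd : ∀ i x, 0 ≤ ⟪H i x, x⟫)
    (hHle : ∀ i x, ⟪H i x, x⟫ ≤ ri i * ‖x‖ ^ 2)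
    (hHdesc : ∀ i x z, fi i x ≤ fi i z + ⟪gradient (fi i) z, x - z⟫
        + (1 / 2) * ⟪H i (x - z), x - z⟫)
    (xb : ℕ → Vec n)
    (xi pii zi : Fin m → ℕ → Vec n)
    (C : ℕ → Finset (Fin m))
    (hx0 : ∀ i, xi i 0 = xb 0)
    (hp0 : ∀ i, pii i 0 = -((m : ℝ)⁻¹ • gradient (fi i) (xb 0)))
    (hz0 : ∀ i, zi i 0 = xi i 0 + σ⁻¹ • pii i 0)
    (hagg : ∀ k : ℕ, k % k₀ = 0 → xb ((k + 1) / k₀) = (m : ℝ)⁻¹ • ∑ i, zi i k)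
    (hupdx : ∀ k : ℕ, ∀ i ∈ C ((k + 1) / k₀),
      (m : ℝ)⁻¹ • H i (xi i (k + 1) - xb ((k + 1) / k₀))
        + σ • (xi i (k + 1) - xb ((k + 1) / k₀))
        + (m : ℝ)⁻¹ • gradient (fi i) (xb ((k + 1) / k₀)) + pii i k = 0)
    (hupdp : ∀ k : ℕ, ∀ i ∈ C ((k + 1) / k₀),
      pii i (k + 1) = pii i k + σ • (xi i (k + 1) - xb ((k + 1) / k₀)))
    (hupdz : ∀ k : ℕ, ∀ i ∈ C ((k + 1) / k₀),
      zi i (k + 1) = xi i (k + 1) + σ⁻¹ • pii i (k + 1))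
    (hfixx : ∀ k : ℕ, ∀ i ∉ C ((k + 1) / k₀), xi i (k + 1) = xb ((k + 1) / k₀))
    (hfixp : ∀ k : ℕ, ∀ i ∉ C ((k + 1) / k₀),
      pii i (k + 1) = -((m : ℝ)⁻¹ • gradient (fi i) (xb ((k + 1) / k₀))))
    (hfixz : ∀ k : ℕ, ∀ i ∉ C ((k + 1) / k₀),
      zi i (k + 1) = xb ((k + 1) / k₀)
        - σ⁻¹ • ((m : ℝ)⁻¹ • gradient (fi i) (xb ((k + 1) / k₀))))
    (hσr : ∀ i, 6 * ri i / (m : ℝ) ≤ σ) :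
    BddBelow (Set.range (ftot m fi)) ∧
      ∀ k : ℕ, sInf (Set.range (ftot m fi)) ≤ ftot m fi (xb (k / k₀)) ∧
        ftot m fi (xb (k / k₀)) ≤
          LA m σ fi (xb (k / k₀)) (fun i => xi i k) (fun i => pii i k) := by

  have hm' : (0:ℝ) < m := Nat.cast_pos.mpr hm
  have hμ : (0:ℝ) < (m:ℝ)⁻¹ := inv_pos.mpr hm'
  have hb' : ∀ i, ∃ c, ∀ x, c ≤ fi i x := fun i => by
    obtain ⟨c, hc⟩ := hfib i
    exact ⟨c, fun x => hc ⟨x, rfl⟩⟩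
  choose b hb using hb'
  have hbdd : BddBelow (Set.range (ftot m fi)) := by
    refine ⟨(m:ℝ)⁻¹ * ∑ i, b i, ?_⟩
    rintro y ⟨x, rfl⟩
    exact mul_le_mul_of_nonneg_left (Finset.sum_le_sum fun i _ => hb i x) hμ.le
  have hpi : ∀ k i, pii i k
      = -((m:ℝ)⁻¹ • (gradient (fi i) (xb (k / k₀)) + H i (xi i k - xb (k / k₀)))) := by
    intro k i
    cases k with
    | zero => simp [hp0 i, hx0 i]
    | succ j =>
      by_cases hiC : i ∈ C ((j + 1) / k₀)
      · have h := hupdx j i hiC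
        have hpj := eq_neg_of_add_eq_zero_right h
        rw [hupdp j i hiC, hpj, smul_add]
        abel
      · simp [hfixp j i hiC, hfixx j i hiC]
  refine ⟨hbdd, fun k => ⟨csInf_le hbdd ⟨_, rfl⟩, ?_⟩⟩
  unfold ftot LA
  rw [Finset.mul_sum]
  refine Finset.sum_le_sum fun i _ => ?_
  dsimp only
  have hpik := hpi k i
  set xk := xb (k / k₀) with hxb
  set d := xi i k - xk with hd
  have hinner : ⟪d, pii i k⟫
      = -((m:ℝ)⁻¹ * (⟪d, gradient (fi i) xk⟫ + ⟪d, H i d⟫)) := by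
    rw [hpik, inner_neg_right, real_inner_smul_right, inner_add_right]
  have hdesc := hHdesc i xk (xi i k)
  have hneg : xk - xi i k = -d := by rw [hd]; abel
  rw [hneg, map_neg, inner_neg_neg, inner_neg_right] at hdesc
  have hcs : ⟪d, gradient (fi i) xk⟫ - ⟪d, gradient (fi i) (xi i k)⟫ ≤ ri i * ‖d‖ ^ 2 := by
    rw [← inner_sub_right]
    calc ⟪d, gradient (fi i) xk - gradient (fi i) (xi i k)⟫
        ≤ ‖d‖ * ‖gradient (fi i) xk - gradient (fi i) (xi i k)‖ := real_inner_le_norm _ _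
      _ ≤ ‖d‖ * (ri i * ‖xk - xi i k‖) :=
          mul_le_mul_of_nonneg_left (hlip i xk (xi i k)) (norm_nonneg _)
      _ = ri i * ‖d‖ ^ 2 := by rw [hneg, norm_neg]; ring
  have hHd : ⟪d, H i d⟫ ≤ ri i * ‖d‖ ^ 2 := by
    rw [real_inner_comm]; exact hHle i d
  have hcomm : ⟪gradient (fi i) (xi i k), d⟫ = ⟪d, gradient (fi i) (xi i k)⟫ :=
    real_inner_comm _ _
  have hcomm2 : ⟪H i d, d⟫ = ⟪d, H i d⟫ := real_inner_comm _ _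
  have h1 : fi i xk - fi i (xi i k) + ⟪d, gradient (fi i) xk⟫ + ⟪d, H i d⟫
      ≤ 5 / 2 * ri i * ‖d‖ ^ 2 := by
    rw [hcomm, hcomm2] at hdesc
    linarith
  have hkey : (m:ℝ)⁻¹ * ri i ≤ σ / 6 := by
    have h6 : 6 * (ri i / m) ≤ σ := by rw [← mul_div_assoc]; exact hσr i
    rw [inv_mul_eq_div]
    linarith
  have hs : (0:ℝ) ≤ ‖d‖ ^ 2 := sq_nonneg _
  show (m:ℝ)⁻¹ * fi i xk ≤ (m:ℝ)⁻¹ * fi i (xi i k) + ⟪d, pii i k⟫ + σ / 2 * ‖d‖ ^ 2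
  rw [hinner]
  nlinarith [mul_le_mul_of_nonneg_left h1 hμ.le,
             mul_le_mul_of_nonneg_right hkey hs,
             mul_nonneg hσ.le hs]
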